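/- Suppose that f is a holomorphic self-map of the open unit disc D, b ∈ D, and h is the conformal automorphism of D defined as follows: if f(b) ≠ b, then h is the hyperbolic automorphism of D whose axis is the hyperbolic line through b and f(b) and which satisfies h(f(b)) = b; if f(b) = b, then h is the identity. Then for every u in D, ρ(f(u), h(f(u))) ≤ exp(ρ(u,b)) · ρ(f(b), b). -/

import Mathlib

/-!
A hyperbolic automorphism `h` with axis `A` and translation length `ℓ` displaces points by
`sinh (ρ(w, h w) / 2) = sinh (ℓ / 2) · cosh ρ(w, A)`, so for `z ∈ A` we get
`sinh (ρ(w, h w) / 2) ≤ sinh (ℓ / 2) · cosh ρ(w, z)`. The point `f b` minimises the displacement,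
hence lies on `A`, and `h (f b) = b` gives `ρ(f b, b) = ℓ`. With `w = f u` and the Schwarz–Pick
inequality `ρ(f u, f b) ≤ ρ(u, b)` this yields
`sinh (ρ(f u, h (f u)) / 2) ≤ cosh ρ(u, b) · sinh (ρ(f b, b) / 2)`. Since `sinh` is convex on
`[0, ∞)`, `c · sinh t ≤ sinh (c t)` for `c ≥ 1`, whence
`ρ(f u, h (f u)) ≤ cosh ρ(u, b) · ρ(f b, b) ≤ exp ρ(u, b) · ρ(f b, b)`.
-/

open Complex Metric Set

/-- The hyperbolic metric on the open unit disc: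
`ρ(u,v) = 2 · arsinh (|u − v| / √((1 − |u|²)(1 − |v|²)))`. -/
noncomputable def rho (u v : ℂ) : ℝ :=
  2 * Real.arsinh (‖u - v‖ /
    Real.sqrt ((1 - ‖u‖ ^ 2) * (1 - ‖v‖ ^ 2)))

open ComplexConjugate

namespace Real

theorem mul_sinh_le_sinh_mul {c y : ℝ} (hc : 1 ≤ c) (hy : 0 ≤ y) :
    c * sinh y ≤ sinh (c * y) := by
  let φ : ℝ → ℝ := fun t ↦ sinh (c * t) - c * sinh t
  have hφ : ∀ t, HasDerivAt φ (c * (cosh (c * t) - cosh t)) t := fun t ↦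
    (((hasDerivAt_id' t).const_mul c).sinh.sub ((hasDerivAt_sinh t).const_mul c)).congr_deriv
      (by ring)
  have hmono : MonotoneOn φ (Ici 0) := by
    refine monotoneOn_of_deriv_nonneg (convex_Ici 0)
      (fun t _ ↦ (hφ t).continuousAt.continuousWithinAt)
      (fun t _ ↦ (hφ t).differentiableAt.differentiableWithinAt) fun t ht ↦ ?_
    rw [interior_Ici, mem_Ioi] at ht
    rw [(hφ t).deriv]
    have : cosh t ≤ cosh (c * t) := cosh_le_cosh.2 (by
      rw [abs_of_pos ht, abs_of_nonneg (by positivity)]; nlinarith)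
    nlinarith
  have := hmono self_mem_Ici (mem_Ici.2 hy) hy
  simp only [φ, mul_zero, sinh_zero, sub_zero] at this
  linarith

theorem cosh_le_exp {x : ℝ} (hx : 0 ≤ x) : cosh x ≤ exp x := by
  rw [cosh_eq]
  have : exp (-x) ≤ exp x := exp_le_exp.2 (by linarith)
  linarith

theorem le_mul_of_sinh_half_le_mul {x y c : ℝ} (hc : 1 ≤ c) (hy : 0 ≤ y)
    (h : sinh (x / 2) ≤ c * sinh (y / 2)) : x ≤ c * y := by
  have := h.trans (mul_sinh_le_sinh_mul hc (by positivity))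
  rw [sinh_le_sinh] at this
  linarith

end Real

noncomputable def moebius (α β w : ℂ) : ℂ := (α * w + β) / (conj β * w + conj α)

section Moebius

variable {α β w : ℂ}

theorem normSq_moebius_den_sub_normSq_num (α β w : ℂ) :
    normSq (conj β * w + conj α) - normSq (α * w + β) =
      (normSq α - normSq β) * (1 - normSq w) := by
  simp only [normSq_apply, add_re, add_im, mul_re, mul_im, conj_re, conj_im]
  ring

theorem normSq_moebius_num_lt_den (hαβ : ‖β‖ < ‖α‖) (hw : ‖w‖ < 1) :
    normSq (α * w + β) < normSq (conj β * w + conj α) := by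
  have hαβ' : normSq β < normSq α := by
    rw [← Complex.sq_norm, ← Complex.sq_norm]; gcongr
  have hw' : normSq w < 1 := by
    rw [← Complex.sq_norm]; exact pow_lt_one₀ (norm_nonneg _) hw two_ne_zero
  nlinarith [normSq_moebius_den_sub_normSq_num α β w]

theorem moebius_den_ne_zero (hαβ : ‖β‖ < ‖α‖) (hw : ‖w‖ < 1) :
    conj β * w + conj α ≠ 0 := by
  rw [← normSq_pos]
  exact (normSq_nonneg _).trans_lt (normSq_moebius_num_lt_den hαβ hw)

theorem norm_moebius_lt_one (hαβ : ‖β‖ < ‖α‖) (hw : ‖w‖ < 1) : ‖moebius α β w‖ < 1 := by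
  rw [moebius, norm_div, div_lt_one (norm_pos_iff.2 (moebius_den_ne_zero hαβ hw)),
    norm_def, norm_def]
  exact Real.sqrt_lt_sqrt (normSq_nonneg _) (normSq_moebius_num_lt_den hαβ hw)

theorem mapsTo_moebius (hαβ : ‖β‖ < ‖α‖) :
    MapsTo (moebius α β) (ball 0 1) (ball 0 1) := fun w hw ↦ by
  rw [mem_ball_zero_iff] at hw ⊢
  exact norm_moebius_lt_one hαβ hw

theorem differentiableOn_moebius (hαβ : ‖β‖ < ‖α‖) :
    DifferentiableOn ℂ (moebius α β) (ball 0 1) := fun w hw ↦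
  DifferentiableAt.differentiableWithinAt <|
    .div (by fun_prop) (by fun_prop) (moebius_den_ne_zero hαβ (mem_ball_zero_iff.1 hw))

theorem moebius_one_neg_self (a : ℂ) : moebius 1 (-a) a = 0 := by simp [moebius]

theorem moebius_one_zero (a : ℂ) : moebius 1 a 0 = a := by simp [moebius]

theorem moebius_one_moebius_one_neg {a : ℂ} (ha : ‖a‖ < 1) (hw : ‖w‖ < 1) :
    moebius 1 a (moebius 1 (-a) w) = w := by
  have ha' : ‖-a‖ < ‖(1 : ℂ)‖ := by simpa using ha
  have hz : moebius 1 (-a) w * (conj (-a) * w + conj 1) = 1 * w + -a :=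
    div_mul_cancel₀ _ (moebius_den_ne_zero ha' hw)
  have hd := moebius_den_ne_zero (α := 1) (β := a) (by simpa using ha)
    (norm_moebius_lt_one ha' hw)
  rw [moebius, div_eq_iff hd]
  simp only [map_one, map_neg] at hz ⊢
  linear_combination hz

theorem norm_moebius_apply_le_of_mapsTo_ball {f : ℂ → ℂ} (hf : DifferentiableOn ℂ f (ball 0 1))
    (hmaps : MapsTo f (ball 0 1) (ball 0 1)) {u v : ℂ} (hu : ‖u‖ < 1) (hv : ‖v‖ < 1) :
    ‖moebius 1 (-f v) (f u)‖ ≤ ‖moebius 1 (-v) u‖ := by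
  have hfv : ‖-f v‖ < ‖(1 : ℂ)‖ := by
    simpa using mem_ball_zero_iff.1 (hmaps (mem_ball_zero_iff.2 hv))
  have hv₁ : ‖v‖ < ‖(1 : ℂ)‖ := by simpa using hv
  have hv₂ : ‖-v‖ < ‖(1 : ℂ)‖ := by simpa using hv
  -- Schwarz's lemma for `moebius 1 (-f v) ∘ f ∘ moebius 1 v`, which fixes `0`
  have hg := Complex.norm_le_norm_of_mapsTo_ball
    ((differentiableOn_moebius hfv).comp (hf.comp (differentiableOn_moebius hv₁)
      (mapsTo_moebius hv₁)) (hmaps.comp (mapsTo_moebius hv₁)))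
    (((mapsTo_moebius hfv).comp (hmaps.comp (mapsTo_moebius hv₁))).mono_right
      ball_subset_closedBall)
    (by simp only [Function.comp, moebius_one_zero, moebius_one_neg_self])
    (norm_moebius_lt_one hv₂ hu)
  simpa only [Function.comp, moebius_one_moebius_one_neg hv hu] using hg

end Moebius

section Rho

variable {u v : ℂ}

theorem sq_norm_one_sub_conj_mul (u v : ℂ) :
    ‖1 - conj v * u‖ ^ 2 = (1 - ‖u‖ ^ 2) * (1 - ‖v‖ ^ 2) + ‖u - v‖ ^ 2 := by
  have := normSq_moebius_den_sub_normSq_num 1 (-v) u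
  simp only [map_neg, map_one, one_mul, neg_mul, neg_add_eq_sub,
    ← sub_eq_add_neg, ← Complex.sq_norm, norm_neg] at this
  linarith

theorem rho_self (u : ℂ) : rho u u = 0 := by simp [rho]

theorem rho_nonneg (u v : ℂ) : 0 ≤ rho u v :=
  mul_nonneg zero_le_two (Real.arsinh_nonneg_iff.2 (by positivity))

theorem sinh_half_rho (u v : ℂ) :
    Real.sinh (rho u v / 2) = ‖u - v‖ / √((1 - ‖u‖ ^ 2) * (1 - ‖v‖ ^ 2)) := by
  rw [rho, mul_div_cancel_left₀ _ two_ne_zero, Real.sinh_arsinh]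

theorem sinh_half_rho_nonneg (u v : ℂ) : 0 ≤ Real.sinh (rho u v / 2) := by
  rw [sinh_half_rho]
  positivity

theorem one_sub_sq_norm_pos {w : ℂ} (hw : ‖w‖ < 1) : 0 < 1 - ‖w‖ ^ 2 := by
  nlinarith [norm_nonneg w]

theorem cosh_half_rho (hu : ‖u‖ < 1) (hv : ‖v‖ < 1) :
    Real.cosh (rho u v / 2) = ‖1 - conj v * u‖ / √((1 - ‖u‖ ^ 2) * (1 - ‖v‖ ^ 2)) := by
  have hD := mul_pos (one_sub_sq_norm_pos hu) (one_sub_sq_norm_pos hv)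
  rw [rho, mul_div_cancel_left₀ _ two_ne_zero, Real.cosh_arsinh, div_pow, Real.sq_sqrt hD.le,
    one_add_div hD.ne', ← sq_norm_one_sub_conj_mul, Real.sqrt_div' _ hD.le,
    Real.sqrt_sq (norm_nonneg _)]

theorem sinh_rho (hu : ‖u‖ < 1) (hv : ‖v‖ < 1) :
    Real.sinh (rho u v) =
      2 * ‖u - v‖ * ‖1 - conj v * u‖ / ((1 - ‖u‖ ^ 2) * (1 - ‖v‖ ^ 2)) := by
  have hD := mul_pos (one_sub_sq_norm_pos hu) (one_sub_sq_norm_pos hv)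
  rw [← mul_div_cancel₀ (rho u v) two_ne_zero, Real.sinh_two_mul, sinh_half_rho,
    cosh_half_rho hu hv, mul_assoc, div_mul_div_comm, Real.mul_self_sqrt hD.le]
  ring

theorem tanh_half_rho (hu : ‖u‖ < 1) (hv : ‖v‖ < 1) :
    Real.tanh (rho u v / 2) = ‖moebius 1 (-v) u‖ := by
  have hD := Real.sqrt_pos.2 (mul_pos (one_sub_sq_norm_pos hu) (one_sub_sq_norm_pos hv))
  rw [Real.tanh_eq_sinh_div_cosh, sinh_half_rho, cosh_half_rho hu hv,
    div_div_div_cancel_right₀ hD.ne', moebius, norm_div]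
  simp only [one_mul, map_neg, map_one, neg_mul, neg_add_eq_sub, ← sub_eq_add_neg]

theorem rho_le_rho_of_mapsTo_ball {f : ℂ → ℂ} (hf : DifferentiableOn ℂ f (ball 0 1))
    (hmaps : MapsTo f (ball 0 1) (ball 0 1)) (hu : ‖u‖ < 1) (hv : ‖v‖ < 1) :
    rho (f u) (f v) ≤ rho u v := by
  have hfu := mem_ball_zero_iff.1 (hmaps (mem_ball_zero_iff.2 hu))
  have hfv := mem_ball_zero_iff.1 (hmaps (mem_ball_zero_iff.2 hv))
  have key := Real.artanh_le_artanh (by linarith [norm_nonneg (moebius 1 (-f v) (f u))])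
    (norm_moebius_lt_one (by simpa using hv) hu)
    (norm_moebius_apply_le_of_mapsTo_ball hf hmaps hu hv)
  rw [← tanh_half_rho hfu hfv, ← tanh_half_rho hu hv, Real.artanh_tanh, Real.artanh_tanh] at key
  linarith

end Rho

noncomputable def displacementNum (α β w : ℂ) : ℂ := conj β * w ^ 2 - (α - conj α) * w - β

/-- In the disc, the axis of `moebius α β` is the zero set of `axisDefect α β`, and
`axisDefect α β w / (1 - ‖w‖ ^ 2)` is `√(Re α ^ 2 - 1)` times the sinh of the signed distance
from `w` to the axis. -/
noncomputable def axisDefect (α β w : ℂ) : ℝ := 2 * (conj β * w).im - α.im * (1 + normSq w)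

/-- The Hermitian polarisation of `axisDefect`: `axisForm α β w w = axisDefect α β w`. -/
noncomputable def axisForm (α β w z : ℂ) : ℂ :=
  -(α.im : ℂ) * (conj z * w + 1) + I * (β * conj z - conj β * w)

section Displacement

variable {α β w z : ℂ}

theorem normSq_displacementNum (α β w : ℂ) :
    normSq (displacementNum α β w) =
      axisDefect α β w ^ 2 + (normSq β - α.im ^ 2) * (1 - normSq w) ^ 2 := by
  simp only [displacementNum, axisDefect, normSq_apply, mul_re, mul_im, sub_re, sub_im, conj_re,
    conj_im, pow_two]
  ring

theorem normSq_axisForm (α β w z : ℂ) :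
    normSq (axisForm α β w z) =
      (normSq β - α.im ^ 2) * normSq (w - z) + axisDefect α β w * axisDefect α β z := by
  simp only [axisForm, axisDefect, normSq_apply, mul_re, mul_im, sub_re, sub_im, add_re, add_im,
    conj_re, conj_im, neg_re, neg_im, ofReal_re, ofReal_im, I_re, I_im, one_re, one_im]
  ring

theorem two_mul_re_axisForm_mul (α β w z : ℂ) :
    2 * (axisForm α β w z * (1 - conj w * z)).re =
      (1 - normSq z) * axisDefect α β w + (1 - normSq w) * axisDefect α β z := by
  simp only [axisForm, axisDefect, normSq_apply, mul_re, mul_im, sub_re, sub_im, add_re, add_im,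
    conj_re, conj_im, neg_re, neg_im, ofReal_re, ofReal_im, I_re, I_im, one_re, one_im]
  ring

theorem sub_moebius (hd : conj β * w + conj α ≠ 0) :
    w - moebius α β w = displacementNum α β w / (conj β * w + conj α) := by
  rw [moebius, eq_div_iff hd, sub_mul, div_mul_cancel₀ _ hd, displacementNum]
  ring

theorem one_sub_sq_norm_moebius (hαβ : ‖α‖ ^ 2 - ‖β‖ ^ 2 = 1) (hd : conj β * w + conj α ≠ 0) :
    1 - ‖moebius α β w‖ ^ 2 = (1 - ‖w‖ ^ 2) / ‖conj β * w + conj α‖ ^ 2 := by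
  have hid := normSq_moebius_den_sub_normSq_num α β w
  simp only [← Complex.sq_norm, hαβ, one_mul] at hid
  rw [moebius, norm_div, div_pow, eq_div_iff (by positivity), sub_mul,
    div_mul_cancel₀ _ (by positivity)]
  linarith

theorem sinh_half_rho_moebius (hαβ : ‖α‖ ^ 2 - ‖β‖ ^ 2 = 1) (hw : ‖w‖ < 1) :
    Real.sinh (rho w (moebius α β w) / 2) = ‖displacementNum α β w‖ / (1 - ‖w‖ ^ 2) := by
  have hlt : ‖β‖ < ‖α‖ := by nlinarith [norm_nonneg α, norm_nonneg β]
  have hd := moebius_den_ne_zero hlt hw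
  have hdpos : 0 < ‖conj β * w + conj α‖ := norm_pos_iff.2 hd
  have hw' := one_sub_sq_norm_pos hw
  rw [sinh_half_rho, sub_moebius hd, one_sub_sq_norm_moebius hαβ hd, norm_div,
    ← mul_div_assoc, ← sq, Real.sqrt_div' _ (by positivity), Real.sqrt_sq hw'.le,
    Real.sqrt_sq hdpos.le, div_div_div_cancel_right₀ hdpos.ne']

theorem sinh_sq_half_rho_moebius (hαβ : ‖α‖ ^ 2 - ‖β‖ ^ 2 = 1) (hw : ‖w‖ < 1) :
    Real.sinh (rho w (moebius α β w) / 2) ^ 2 =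
      α.re ^ 2 - 1 + (axisDefect α β w / (1 - ‖w‖ ^ 2)) ^ 2 := by
  have hw' := one_sub_sq_norm_pos hw
  have hQ := normSq_displacementNum α β w
  have hα : normSq α = α.re ^ 2 + α.im ^ 2 := by rw [normSq_apply]; ring
  simp only [← Complex.sq_norm] at hQ hα
  rw [sinh_half_rho_moebius hαβ hw, div_pow, hQ, div_pow]
  field_simp
  nlinarith

theorem exists_axisDefect_eq_zero (hαβ : ‖α‖ ^ 2 - ‖β‖ ^ 2 = 1) (htr : 1 < |α.re|) :
    ∃ v : ℂ, ‖v‖ < 1 ∧ axisDefect α β v = 0 := by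
  set k := √(α.re ^ 2 - 1)
  have hre : 1 < α.re ^ 2 := by nlinarith [sq_abs α.re, abs_nonneg α.re]
  have hk : 0 < k := Real.sqrt_pos.2 (by linarith)
  have hkk : k ^ 2 = α.re ^ 2 - 1 := Real.sq_sqrt (by linarith)
  have hα : ‖α‖ ^ 2 = α.re ^ 2 + α.im ^ 2 := by rw [Complex.sq_norm, normSq_apply]; ring
  set B := ‖β‖
  have hBk : B ^ 2 - k ^ 2 = α.im ^ 2 := by linarith
  have hB : 0 < B := by nlinarith [norm_nonneg β, sq_nonneg α.im]
  -- `axisDefect α β (I s β / B) = 2 B s - Im α (1 + s ^ 2)`, and this root has `|s| < 1`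
  obtain ⟨s, hs⟩ : ∃ s : ℝ, s * (B + k) = α.im :=
    ⟨α.im / (B + k), div_mul_cancel₀ _ (by positivity)⟩
  have hs2 : s ^ 2 * (B + k) = B - k := by
    have : s ^ 2 * (B + k) * (B + k) = (B - k) * (B + k) := by
      linear_combination (s * (B + k) + α.im) * hs - hBk
    exact mul_right_cancel₀ (by positivity) this
  refine ⟨(I * (s / B : ℝ)) * β, ?_, ?_⟩
  · rw [norm_mul, norm_mul, norm_I, one_mul, norm_real, Real.norm_eq_abs, abs_div,
      abs_of_pos hB, div_mul_cancel₀ _ hB.ne', ← sq_lt_one_iff_abs_lt_one]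
    nlinarith
  · have hnorm : normSq β = B ^ 2 := (Complex.sq_norm β).symm
    have hv : conj β * (I * (s / B : ℝ) * β) = I * ((s * B : ℝ) : ℂ) := by
      rw [mul_left_comm, mul_comm (conj β), mul_conj, hnorm]
      push_cast
      field_simp
    have hnv : normSq (I * (s / B : ℝ) * β) = s ^ 2 := by
      rw [normSq_mul, normSq_mul, normSq_I, normSq_ofReal, hnorm]
      field_simp
    rw [axisDefect, hv, hnv]
    simp only [mul_im, I_re, I_im, ofReal_re, ofReal_im]
    rw [← hs]
    linear_combination (-s) * hs2

theorem sinh_half_rho_moebius_of_axisDefect_eq_zero (hαβ : ‖α‖ ^ 2 - ‖β‖ ^ 2 = 1)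
    (hz : ‖z‖ < 1) (hEz : axisDefect α β z = 0) :
    Real.sinh (rho z (moebius α β z) / 2) = √(α.re ^ 2 - 1) := by
  have h := sinh_sq_half_rho_moebius hαβ hz
  rw [hEz, zero_div, zero_pow two_ne_zero, add_zero] at h
  rw [← h, Real.sqrt_sq (sinh_half_rho_nonneg _ _)]

theorem axisDefect_eq_zero_of_forall_rho_le (hαβ : ‖α‖ ^ 2 - ‖β‖ ^ 2 = 1) (htr : 1 < |α.re|)
    (hz : ‖z‖ < 1)
    (hmin : ∀ w ∈ ball (0 : ℂ) 1, rho z (moebius α β z) ≤ rho w (moebius α β w)) :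
    axisDefect α β z = 0 := by
  obtain ⟨v, hv, hEv⟩ := exists_axisDefect_eq_zero hαβ htr
  have hle := Real.sinh_le_sinh.2
    (div_le_div_of_nonneg_right (hmin v (mem_ball_zero_iff.2 hv)) zero_le_two)
  have hsq := pow_le_pow_left₀ (sinh_half_rho_nonneg _ _) hle 2
  rw [sinh_sq_half_rho_moebius hαβ hz, sinh_sq_half_rho_moebius hαβ hv, hEv, zero_div,
    zero_pow two_ne_zero, add_zero] at hsq
  have : axisDefect α β z / (1 - ‖z‖ ^ 2) = 0 := by nlinarith
  simpa [(one_sub_sq_norm_pos hz).ne'] using this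

theorem abs_axisDefect_div_le (hαβ : ‖α‖ ^ 2 - ‖β‖ ^ 2 = 1) (hw : ‖w‖ < 1) (hz : ‖z‖ < 1)
    (hEz : axisDefect α β z = 0) :
    |axisDefect α β w| / (1 - ‖w‖ ^ 2) ≤ √(α.re ^ 2 - 1) * Real.sinh (rho w z) := by
  have hk : normSq β - α.im ^ 2 = α.re ^ 2 - 1 := by
    have := normSq_apply α
    simp only [← Complex.sq_norm] at this ⊢
    nlinarith
  have hre := two_mul_re_axisForm_mul α β z w
  rw [hEz, mul_zero, zero_add] at hre
  have hT : ‖axisForm α β z w‖ = √(α.re ^ 2 - 1) * ‖w - z‖ := by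
    rw [norm_def, normSq_axisForm, hEz, zero_mul, add_zero, hk,
      Real.sqrt_mul' _ (normSq_nonneg _), ← norm_def, norm_sub_rev]
  have hpair : (1 - ‖z‖ ^ 2) * |axisDefect α β w| ≤
      2 * (√(α.re ^ 2 - 1) * ‖w - z‖ * ‖1 - conj z * w‖) := by
    simp only [← Complex.sq_norm] at hre
    rw [← hT, ← norm_mul, ← abs_of_pos (one_sub_sq_norm_pos hz), ← abs_mul, ← hre,
      abs_mul, abs_two]
    exact mul_le_mul_of_nonneg_left (abs_re_le_norm _) zero_le_two
  have hw' := one_sub_sq_norm_pos hw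
  have hz' := one_sub_sq_norm_pos hz
  rw [sinh_rho hw hz, div_le_iff₀ hw']
  calc |axisDefect α β w| = (1 - ‖z‖ ^ 2) * |axisDefect α β w| / (1 - ‖z‖ ^ 2) := by
        field_simp
    _ ≤ 2 * (√(α.re ^ 2 - 1) * ‖w - z‖ * ‖1 - conj z * w‖) / (1 - ‖z‖ ^ 2) := by gcongr
    _ = _ := by field_simp

theorem sinh_half_rho_moebius_le (hαβ : ‖α‖ ^ 2 - ‖β‖ ^ 2 = 1) (hw : ‖w‖ < 1) (hz : ‖z‖ < 1)
    (hEz : axisDefect α β z = 0) :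
    Real.sinh (rho w (moebius α β w) / 2) ≤
      Real.sinh (rho z (moebius α β z) / 2) * Real.cosh (rho w z) := by
  have hk := sinh_half_rho_moebius_of_axisDefect_eq_zero hαβ hz hEz
  have hk2 : Real.sinh (rho z (moebius α β z) / 2) ^ 2 = α.re ^ 2 - 1 := by
    simpa [hEz] using sinh_sq_half_rho_moebius hαβ hz
  have hdist := abs_axisDefect_div_le hαβ hw hz hEz
  rw [← hk] at hdist
  set k := Real.sinh (rho z (moebius α β z) / 2)
  have hk0 : 0 ≤ k := sinh_half_rho_nonneg _ _
  have hsq : (axisDefect α β w / (1 - ‖w‖ ^ 2)) ^ 2 ≤ (k * Real.sinh (rho w z)) ^ 2 := by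
    rw [← sq_abs, abs_div, abs_of_pos (one_sub_sq_norm_pos hw)]
    exact pow_le_pow_left₀ (div_nonneg (abs_nonneg _) (one_sub_sq_norm_pos hw).le) hdist _
  refine (pow_le_pow_iff_left₀ (sinh_half_rho_nonneg _ _) (by positivity) two_ne_zero).1 ?_
  rw [sinh_sq_half_rho_moebius hαβ hw, ← hk2, mul_pow, Real.cosh_sq]
  nlinarith

end Displacement

/-- Let `f` be a holomorphic self-map of the disc and `b` a point of the disc.
Let `h` be the conformal automorphism of the disc defined as follows: if
`f(b) ≠ b`, then `h` is the hyperbolic automorphism (written in the form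
`w ↦ (αw + β)/(β̄w + ᾱ)`, `|α|² − |β|² = 1`, with trace condition `|Re α| > 1`)
whose axis is the hyperbolic line through `b` and `f(b)` — membership of `b`
and `f(b)` in the axis being expressed by the fact that they minimize the
displacement `w ↦ ρ(w,h(w))`, which characterizes the axis of a hyperbolic
automorphism — and which satisfies `h(f(b)) = b`; if `f(b) = b`, then `h` is
the identity on the disc.  Then `ρ(f(u), h(f(u))) ≤ exp(ρ(u,b))·ρ(f(b),b)` for
all `u` in the disc. -/
theorem displacement_correction_automorphism (f h : ℂ → ℂ)
    (hf : DifferentiableOn ℂ f (ball (0:ℂ) 1))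
    (hmaps : MapsTo f (ball (0:ℂ) 1) (ball (0:ℂ) 1))
    (b : ℂ) (hb : b ∈ ball (0:ℂ) 1)
    (hcase_fix : f b = b → ∀ w ∈ ball (0:ℂ) 1, h w = w)
    (hcase_move : f b ≠ b → ∃ α β : ℂ,
      (∀ w ∈ ball (0:ℂ) 1,
        h w = (α * w + β) / ((starRingEnd ℂ) β * w + (starRingEnd ℂ) α)) ∧
      ‖α‖ ^ 2 - ‖β‖ ^ 2 = 1 ∧
      1 < |α.re| ∧
      (∀ w ∈ ball (0:ℂ) 1, rho b (h b) ≤ rho w (h w)) ∧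
      (∀ w ∈ ball (0:ℂ) 1, rho (f b) (h (f b)) ≤ rho w (h w)) ∧
      h (f b) = b) :
    ∀ u ∈ ball (0:ℂ) 1,
      rho (f u) (h (f u)) ≤ Real.exp (rho u b) * rho (f b) b := by
  intro u hu
  have hfu := hmaps hu
  have hfb := hmaps hb
  rw [mem_ball_zero_iff] at hu hb
  by_cases hfix : f b = b
  · rw [hcase_fix hfix _ hfu, hfix, rho_self, rho_self, mul_zero]
  obtain ⟨α, β, hh, hαβ, htr, -, hmin, hhfb⟩ := hcase_move hfix
  replace hh : ∀ w ∈ ball (0 : ℂ) 1, h w = moebius α β w := hh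
  have hE : axisDefect α β (f b) = 0 :=
    axisDefect_eq_zero_of_forall_rho_le hαβ htr (mem_ball_zero_iff.1 hfb) fun w hw ↦ by
      simpa only [hh w hw, hh _ hfb] using hmin w hw
  have hsinh : Real.sinh (rho (f u) (h (f u)) / 2) ≤
      Real.cosh (rho u b) * Real.sinh (rho (f b) b / 2) := by
    calc Real.sinh (rho (f u) (h (f u)) / 2)
        ≤ Real.sinh (rho (f b) (h (f b)) / 2) * Real.cosh (rho (f u) (f b)) := by
          rw [hh _ hfu, hh _ hfb]
          exact sinh_half_rho_moebius_le hαβ (mem_ball_zero_iff.1 hfu)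
            (mem_ball_zero_iff.1 hfb) hE
      _ ≤ Real.sinh (rho (f b) (h (f b)) / 2) * Real.cosh (rho u b) := by
          refine mul_le_mul_of_nonneg_left (Real.cosh_le_cosh.2 ?_) ?_
          · rw [abs_of_nonneg (rho_nonneg _ _), abs_of_nonneg (rho_nonneg _ _)]
            exact rho_le_rho_of_mapsTo_ball hf hmaps hu hb
          · exact sinh_half_rho_nonneg _ _
      _ = Real.cosh (rho u b) * Real.sinh (rho (f b) b / 2) := by rw [hhfb, mul_comm]
  calc rho (f u) (h (f u)) ≤ Real.cosh (rho u b) * rho (f b) b :=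
        Real.le_mul_of_sinh_half_le_mul (Real.one_le_cosh _) (rho_nonneg _ _) hsinh
    _ ≤ Real.exp (rho u b) * rho (f b) b :=
        mul_le_mul_of_nonneg_right (Real.cosh_le_exp (rho_nonneg _ _)) (rho_nonneg _ _)
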